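/- Let f : ℝ → ℝ and u : ℝ → ℝ be infinitely differentiable, let κ ∈ ℝ, let x ∈ ℝ, and assume f′(u(x)) > 0. Then as h → 0⁺ the UMUSCL residual satisfies Res(h) = (1/24)·[f‴(u(x))·u′(x)³ + 6κ·f″(u(x))·u′(x)u″(x) + 2(3κ−1)·f′(u(x))·u‴(x)]·h² + O(h³). In particular, the second-order truncation error term vanishes for all smooth u with κ = 1/3 only when f″ = f‴ = 0, i.e., only for linear fluxes. -/

import Mathlib

open Filter Topology Asymptotics Set
open scoped ContDiff

/-- Van Leer κ-reconstructed left state at the face `x + h/2`. -/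
noncomputable def uLp (κ : ℝ) (u : ℝ → ℝ) (x h : ℝ) : ℝ :=
  κ * (u x + u (x + h)) / 2 + (1 - κ) * (u x + (u (x + h) - u (x - h)) / 4)

/-- Van Leer κ-reconstructed right state at the face `x + h/2`. -/
noncomputable def uRp (κ : ℝ) (u : ℝ → ℝ) (x h : ℝ) : ℝ :=
  κ * (u (x + h) + u x) / 2 + (1 - κ) * (u (x + h) - (u (x + 2 * h) - u x) / 4)

/-- Van Leer κ-reconstructed left state at the face `x − h/2`. -/
noncomputable def uLm (κ : ℝ) (u : ℝ → ℝ) (x h : ℝ) : ℝ :=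
  κ * (u (x - h) + u x) / 2 + (1 - κ) * (u (x - h) + (u x - u (x - 2 * h)) / 4)

/-- Van Leer κ-reconstructed right state at the face `x − h/2`. -/
noncomputable def uRm (κ : ℝ) (u : ℝ → ℝ) (x h : ℝ) : ℝ :=
  κ * (u x + u (x - h)) / 2 + (1 - κ) * (u x - (u (x + h) - u (x - h)) / 4)

/-- The UMUSCL numerical flux `F(a,b) = (f(a)+f(b))/2 − (|f′((a+b)/2)|/2)(b−a)`. -/
noncomputable def numFlux (f : ℝ → ℝ) (a b : ℝ) : ℝ :=
  (f a + f b) / 2 - (|deriv f ((a + b) / 2)| / 2) * (b - a)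

/-- The UMUSCL residual at `x` for the steady conservation law `∂ₓ f(u) = s`
with forcing `s(y) = d/dy f(u(y))`. -/
noncomputable def umusclRes (f : ℝ → ℝ) (κ : ℝ) (u : ℝ → ℝ) (x h : ℝ) : ℝ :=
  (numFlux f (uLp κ u x h) (uRp κ u x h) - numFlux f (uLm κ u x h) (uRm κ u x h)) / h
    - deriv f (u x) * deriv u x

namespace UM

def P3 (a₀ a₁ a₂ a₃ h : ℝ) : ℝ := a₀ + a₁*h + a₂*h^2 + a₃*h^3

def Ex (g : ℝ → ℝ) (a₀ a₁ a₂ a₃ : ℝ) : Prop :=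
  (fun h => g h - P3 a₀ a₁ a₂ a₃ h) =O[𝓝 (0:ℝ)] fun h => h^4

lemma Ex.of_eq {g g' : ℝ → ℝ} {a₀ a₁ a₂ a₃ b₀ b₁ b₂ b₃ : ℝ}
    (hg : Ex g a₀ a₁ a₂ a₃) (hfun : ∀ h, g' h = g h)
    (h0 : b₀ = a₀) (h1 : b₁ = a₁) (h2 : b₂ = a₂) (h3 : b₃ = a₃) :
    Ex g' b₀ b₁ b₂ b₃ := by
  rw [h0, h1, h2, h3]
  unfold Ex at hg ⊢
  refine hg.congr_left fun h => ?_
  rw [hfun]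

lemma ex_P3 (a₀ a₁ a₂ a₃ : ℝ) : Ex (fun h => P3 a₀ a₁ a₂ a₃ h) a₀ a₁ a₂ a₃ := by
  unfold Ex
  have : (fun h : ℝ => P3 a₀ a₁ a₂ a₃ h - P3 a₀ a₁ a₂ a₃ h) = fun _ => (0:ℝ) := by
    funext h; ring
  rw [this]; exact isBigO_zero _ _

lemma ex_const (c : ℝ) : Ex (fun _ => c) c 0 0 0 :=
  (ex_P3 c 0 0 0).of_eq (fun h => by simp [P3]) rfl rfl rfl rfl

lemma Ex.add {g k : ℝ → ℝ} {a₀ a₁ a₂ a₃ b₀ b₁ b₂ b₃ : ℝ}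
    (hg : Ex g a₀ a₁ a₂ a₃) (hk : Ex k b₀ b₁ b₂ b₃) :
    Ex (fun h => g h + k h) (a₀+b₀) (a₁+b₁) (a₂+b₂) (a₃+b₃) := by
  unfold Ex at hg hk ⊢
  refine (IsBigO.add hg hk).congr_left fun h => ?_
  simp [P3]; ring

lemma Ex.sub {g k : ℝ → ℝ} {a₀ a₁ a₂ a₃ b₀ b₁ b₂ b₃ : ℝ}
    (hg : Ex g a₀ a₁ a₂ a₃) (hk : Ex k b₀ b₁ b₂ b₃) :
    Ex (fun h => g h - k h) (a₀-b₀) (a₁-b₁) (a₂-b₂) (a₃-b₃) := by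
  unfold Ex at hg hk ⊢
  refine (IsBigO.sub hg hk).congr_left fun h => ?_
  simp [P3]; ring

lemma Ex.const_mul {g : ℝ → ℝ} {a₀ a₁ a₂ a₃ : ℝ} (c : ℝ)
    (hg : Ex g a₀ a₁ a₂ a₃) :
    Ex (fun h => c * g h) (c*a₀) (c*a₁) (c*a₂) (c*a₃) := by
  unfold Ex at hg ⊢
  refine (hg.const_mul_left c).congr_left fun h => ?_
  simp [P3]; ring


lemma pow_bigO_pow {m n : ℕ} (hmn : m ≤ n) :
    (fun h : ℝ => h^n) =O[𝓝 (0:ℝ)] fun h => h^m := by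
  apply IsBigO.of_bound 1
  have h1 : ∀ᶠ h : ℝ in 𝓝 0, |h| < 1 := by
    filter_upwards [Metric.ball_mem_nhds (0:ℝ) one_pos] with h hh
    simpa [Real.dist_eq] using hh
  filter_upwards [h1] with h hh
  simp only [norm_pow, Real.norm_eq_abs, one_mul]
  exact pow_le_pow_of_le_one (abs_nonneg h) hh.le hmn

lemma Ex.bigO_one {g : ℝ → ℝ} {a₀ a₁ a₂ a₃ : ℝ} (hg : Ex g a₀ a₁ a₂ a₃) :
    g =O[𝓝 (0:ℝ)] fun _ => (1:ℝ) := by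
  unfold Ex at hg
  have h1 : (fun h => g h - P3 a₀ a₁ a₂ a₃ h) =O[𝓝 (0:ℝ)] fun _ => (1:ℝ) :=
    hg.trans (by simpa using pow_bigO_pow (m := 0) (n := 4) (by norm_num))
  have hc : Continuous fun h : ℝ => P3 a₀ a₁ a₂ a₃ h := by unfold P3; fun_prop
  have h2 : (fun h : ℝ => P3 a₀ a₁ a₂ a₃ h) =O[𝓝 (0:ℝ)] fun _ => (1:ℝ) :=
    (hc.tendsto 0).isBigO_one ℝ
  exact (h1.add h2).congr_left fun h => by ring

lemma Ex.mul {g k : ℝ → ℝ} {a₀ a₁ a₂ a₃ b₀ b₁ b₂ b₃ : ℝ}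
    (hg : Ex g a₀ a₁ a₂ a₃) (hk : Ex k b₀ b₁ b₂ b₃) :
    Ex (fun h => g h * k h) (a₀*b₀) (a₀*b₁+a₁*b₀) (a₀*b₂+a₁*b₁+a₂*b₀)
      (a₀*b₃+a₁*b₂+a₂*b₁+a₃*b₀) := by
  have hgO := hg.bigO_one
  have hkO : (fun h : ℝ => P3 b₀ b₁ b₂ b₃ h) =O[𝓝 (0:ℝ)] fun _ => (1:ℝ) :=
    (ex_P3 b₀ b₁ b₂ b₃).bigO_one
  unfold Ex at hg hk ⊢
  have t1 : (fun h => g h * (k h - P3 b₀ b₁ b₂ b₃ h)) =O[𝓝 (0:ℝ)] fun h => h^4 := by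
    simpa using hgO.mul hk
  have t2 : (fun h => (g h - P3 a₀ a₁ a₂ a₃ h) * P3 b₀ b₁ b₂ b₃ h)
      =O[𝓝 (0:ℝ)] fun h => h^4 := by
    simpa [mul_comm] using hg.mul hkO
  have hq : Continuous fun h : ℝ =>
      (a₁*b₃+a₂*b₂+a₃*b₁) + (a₂*b₃+a₃*b₂)*h + a₃*b₃*h^2 := by fun_prop
  have t3 : (fun h : ℝ =>
      ((a₁*b₃+a₂*b₂+a₃*b₁) + (a₂*b₃+a₃*b₂)*h + a₃*b₃*h^2) * h^4)
      =O[𝓝 (0:ℝ)] fun h => h^4 := by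
    simpa using ((hq.tendsto 0).isBigO_one ℝ).mul (isBigO_refl (fun h : ℝ => h^4) _)
  refine ((t1.add t2).add t3).congr_left fun h => ?_
  simp only [P3]; ring


lemma cd_deriv {φ : ℝ → ℝ} (hφ : ContDiff ℝ ∞ φ) : ContDiff ℝ ∞ (deriv φ) :=
  (contDiff_infty_iff_deriv.mp hφ).2

lemma hasDerivAt_shift (φ : ℝ → ℝ) (hφ : Differentiable ℝ φ) (a y : ℝ) :
    HasDerivAt (fun z => φ (a + z)) (deriv φ (a + y)) y := by
  have := (hφ (a + y)).hasDerivAt.comp y ((hasDerivAt_id y).const_add a)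
  simpa [Function.comp_def] using this

lemma step {R : ℝ → ℝ} {n : ℕ} (hd : Differentiable ℝ R) (h0 : R 0 = 0)
    (hO : deriv R =O[𝓝 (0:ℝ)] fun y => y ^ n) :
    R =O[𝓝 (0:ℝ)] fun y => y ^ (n+1) := by
  obtain ⟨C, hC0, hC⟩ := hO.exists_nonneg
  rw [isBigOWith_iff] at hC
  rw [Metric.eventually_nhds_iff] at hC
  obtain ⟨δ, hδ, hball⟩ := hC
  apply IsBigO.of_bound C
  rw [Metric.eventually_nhds_iff]
  refine ⟨δ, hδ, fun y hy => ?_⟩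
  have hy' : |y| < δ := by simpa [Real.dist_eq] using hy
  have habs : ∀ t ∈ Set.uIcc (0:ℝ) y, |t| ≤ |y| := by
    intro t ht
    rcases Set.mem_uIcc.mp ht with ⟨h1, h2⟩ | ⟨h1, h2⟩
    · rw [abs_of_nonneg h1]; exact h2.trans (le_abs_self y)
    · rw [abs_of_nonpos h2]; exact (neg_le_neg h1).trans (neg_le_abs y)
  have hbound : ∀ t ∈ Set.uIcc (0:ℝ) y, ‖deriv R t‖ ≤ C * |y| ^ n := by
    intro t ht
    have hts : dist t 0 < δ := by
      simp only [Real.dist_eq, sub_zero]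
      exact lt_of_le_of_lt (habs t ht) hy'
    refine (hball hts).trans ?_
    have : ‖t ^ n‖ ≤ |y| ^ n := by
      simp only [norm_pow, Real.norm_eq_abs]
      exact pow_le_pow_left₀ (abs_nonneg t) (habs t ht) n
    exact mul_le_mul_of_nonneg_left this hC0
  have := Convex.norm_image_sub_le_of_norm_deriv_le
    (fun t _ => hd t) hbound (convex_uIcc (0:ℝ) y)
    (Set.left_mem_uIcc) (Set.right_mem_uIcc)
  rw [h0, sub_zero, sub_zero] at this
  calc ‖R y‖ ≤ C * |y| ^ n * ‖y‖ := this
    _ = C * ‖y ^ (n+1)‖ := by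
        simp only [Real.norm_eq_abs, abs_pow, pow_succ, abs_mul]; ring

lemma T0 (φ : ℝ → ℝ) (hφ : ContDiff ℝ ∞ φ) (a : ℝ) :
    (fun y => φ (a + y) - φ a) =O[𝓝 (0:ℝ)] fun y : ℝ => y ^ 1 := by
  have h := (hasDerivAt_shift φ (hφ.differentiable (by norm_num)) a 0).hasFDerivAt.isBigO_sub
  simp only [add_zero, sub_zero] at h
  simpa using h

lemma hasDerivAt_cubic (c0 c1 c2 c3 y : ℝ) :
    HasDerivAt (fun z : ℝ => c0 + c1*z + c2*z^2 + c3*z^3)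
      (c1 + 2*c2*y + 3*c3*y^2) y := by
  have h1 : HasDerivAt (fun z : ℝ => z) 1 y := hasDerivAt_id y
  have h2 : HasDerivAt (fun z : ℝ => z^2) (2*y) y := by simpa using hasDerivAt_pow 2 y
  have h3 : HasDerivAt (fun z : ℝ => z^3) (3*y^2) y := by simpa using hasDerivAt_pow 3 y
  have := (((h1.const_mul c1).const_add c0).add (h2.const_mul c2)).add (h3.const_mul c3)
  exact this.congr_deriv (by ring)

lemma Tstep (φ : ℝ → ℝ) (hφ : ContDiff ℝ ∞ φ) (a : ℝ) {n : ℕ}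
    (c1 c2 c3 : ℝ)
    (ih : (fun y => deriv φ (a + y) - (c1 + 2*c2*y + 3*c3*y^2)) =O[𝓝 (0:ℝ)] fun y => y ^ n) :
    (fun y => φ (a + y) - (φ a + c1*y + c2*y^2 + c3*y^3)) =O[𝓝 (0:ℝ)] fun y => y ^ (n+1) := by
  have hφd : Differentiable ℝ φ := hφ.differentiable (by norm_num)
  have hR : ∀ y : ℝ, HasDerivAt (fun z => φ (a + z) - (φ a + c1*z + c2*z^2 + c3*z^3))
      (deriv φ (a + y) - (c1 + 2*c2*y + 3*c3*y^2)) y := fun y =>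
    (hasDerivAt_shift φ hφd a y).sub (hasDerivAt_cubic (φ a) c1 c2 c3 y)
  refine step (fun y => (hR y).differentiableAt) (by simp) ?_
  have : deriv (fun z => φ (a + z) - (φ a + c1*z + c2*z^2 + c3*z^3))
      = fun y => deriv φ (a + y) - (c1 + 2*c2*y + 3*c3*y^2) := funext fun y => (hR y).deriv
  rw [this]
  exact ih

lemma taylor3 (φ : ℝ → ℝ) (hφ : ContDiff ℝ ∞ φ) (a : ℝ) :
    (fun y => φ (a + y) - (φ a + deriv φ a * y + deriv (deriv φ) a / 2 * y^2
      + deriv (deriv (deriv φ)) a / 6 * y^3)) =O[𝓝 (0:ℝ)] fun y : ℝ => y ^ 4 := by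
  have h1 := T0 (deriv (deriv (deriv φ))) (cd_deriv (cd_deriv (cd_deriv hφ))) a
  have h2 : (fun y => deriv (deriv φ) (a + y) - (deriv (deriv φ) a
      + deriv (deriv (deriv φ)) a * y + 0*y^2 + 0*y^3)) =O[𝓝 (0:ℝ)] fun y : ℝ => y ^ 2 := by
    refine Tstep _ (cd_deriv (cd_deriv hφ)) a _ _ _ ?_
    refine h1.congr_left fun y => ?_
    ring_nf
  have h3 : (fun y => deriv φ (a + y) - (deriv φ a + deriv (deriv φ) a * y
      + deriv (deriv (deriv φ)) a / 2 * y^2 + 0*y^3)) =O[𝓝 (0:ℝ)] fun y : ℝ => y ^ 3 := by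
    refine Tstep _ (cd_deriv hφ) a _ _ _ ?_
    refine h2.congr_left fun y => ?_
    ring_nf
  have h4 : (fun y => φ (a + y) - (φ a + deriv φ a * y
      + deriv (deriv φ) a / 2 * y^2 + deriv (deriv (deriv φ)) a / 6 * y^3))
      =O[𝓝 (0:ℝ)] fun y : ℝ => y ^ 4 := by
    refine Tstep _ hφ a _ _ _ ?_
    refine h3.congr_left fun y => ?_
    ring_nf
  exact h4


lemma Ex.comp {g : ℝ → ℝ} {a₀ a₁ a₂ a₃ : ℝ} (hg : Ex g a₀ a₁ a₂ a₃)
    (φ : ℝ → ℝ) (hφ : ContDiff ℝ ∞ φ) :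
    Ex (fun h => φ (g h)) (φ a₀) (deriv φ a₀ * a₁)
      (deriv φ a₀ * a₂ + deriv (deriv φ) a₀ / 2 * a₁^2)
      (deriv φ a₀ * a₃ + deriv (deriv φ) a₀ * (a₁*a₂)
        + deriv (deriv (deriv φ)) a₀ / 6 * a₁^3) := by
  have hwEx : Ex (fun h => g h - a₀) 0 a₁ a₂ a₃ :=
    (hg.sub (ex_const a₀)).of_eq (fun h => rfl) (by ring) (by ring) (by ring) (by ring)
  have hwO : (fun h => g h - a₀) =O[𝓝 (0:ℝ)] fun h : ℝ => h := by
    have h1 : (fun h => (g h - a₀) - P3 0 a₁ a₂ a₃ h) =O[𝓝 (0:ℝ)] fun h : ℝ => h := by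
      refine IsBigO.trans hwEx ?_
      simpa using pow_bigO_pow (m := 1) (n := 4) (by norm_num)
    have hq : Continuous fun h : ℝ => a₁ + a₂*h + a₃*h^2 := by fun_prop
    have h2 : (fun h : ℝ => P3 0 a₁ a₂ a₃ h) =O[𝓝 (0:ℝ)] fun h : ℝ => h := by
      have := ((hq.tendsto 0).isBigO_one ℝ).mul (isBigO_refl (fun h : ℝ => h) (𝓝 0))
      exact this.congr (fun h => by simp [P3]; ring) (fun h => one_mul h)
    have := h1.add h2
    refine this.congr_left fun h => ?_
    ring
  have hwt : Tendsto (fun h => g h - a₀) (𝓝 (0:ℝ)) (𝓝 0) := hwO.trans_tendsto tendsto_id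
  have hc := (taylor3 φ hφ a₀).comp_tendsto hwt
  have hc2 : (fun h => φ (a₀ + (g h - a₀)) - (φ a₀ + deriv φ a₀ * (g h - a₀)
      + deriv (deriv φ) a₀ / 2 * (g h - a₀)^2
      + deriv (deriv (deriv φ)) a₀ / 6 * (g h - a₀)^3))
      =O[𝓝 (0:ℝ)] fun h : ℝ => h^4 := hc.trans (hwO.pow 4)
  have hbr := (((ex_const (φ a₀)).add (hwEx.const_mul (deriv φ a₀))).add
      ((hwEx.mul hwEx).const_mul (deriv (deriv φ) a₀ / 2))).add
      ((hwEx.mul (hwEx.mul hwEx)).const_mul (deriv (deriv (deriv φ)) a₀ / 6))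
  unfold Ex at hbr ⊢
  have total := hc2.add hbr
  refine total.congr_left fun h => ?_
  have e : φ (a₀ + (g h - a₀)) = φ (g h) := by norm_num
  rw [e]
  simp only [P3]
  ring

lemma ex_linear (x a : ℝ) : Ex (fun h => x + a*h) x a 0 0 := by
  have : (fun h : ℝ => (x + a*h) - P3 x a 0 0 h) = fun _ => (0:ℝ) := by
    funext h; simp only [P3]; ring
  unfold Ex; rw [this]; exact isBigO_zero _ _

end UM

/-- Truncation error of the UMUSCL scheme: for smooth `f` and `u` with `f′(u(x)) > 0`,
`Res(h) = (1/24)[f‴(u)u′³ + 6κ f″(u) u′ u″ + 2(3κ−1) f′(u) u‴] h² + O(h³)` as `h → 0⁺`.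
In particular, the second-order term vanishes for all smooth `u` with `κ = 1/3` only
when `f″ = f‴ = 0`, i.e., only for linear fluxes. -/
theorem umuscl_truncation_error
    (f u : ℝ → ℝ) (hf : ContDiff ℝ (⊤ : ℕ∞) f) (hu : ContDiff ℝ (⊤ : ℕ∞) u)
    (κ : ℝ) (x : ℝ) (hpos : 0 < deriv f (u x)) :
    ((fun h : ℝ => umusclRes f κ u x h -
        (1 / 24) * (deriv (deriv (deriv f)) (u x) * (deriv u x) ^ 3
          + 6 * κ * deriv (deriv f) (u x) * deriv u x * deriv (deriv u) x
          + 2 * (3 * κ - 1) * deriv f (u x) * deriv (deriv (deriv u)) x) * h ^ 2)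
        =O[𝓝[>] (0 : ℝ)] fun h : ℝ => h ^ 3) ∧
    ((∀ v : ℝ → ℝ, ContDiff ℝ (⊤ : ℕ∞) v → ∀ y : ℝ,
        deriv (deriv (deriv f)) (v y) * (deriv v y) ^ 3
          + 6 * (1 / 3) * deriv (deriv f) (v y) * deriv v y * deriv (deriv v) y
          + 2 * (3 * (1 / 3) - 1) * deriv f (v y) * deriv (deriv (deriv v)) y = 0) →
      ∀ w : ℝ, deriv (deriv f) w = 0 ∧ deriv (deriv (deriv f)) w = 0) := by
  constructor
  · -- Part 1: the truncation-error expansion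
    have hf' : ContDiff ℝ ∞ f := hf.of_le (by simp)
    have hu' : ContDiff ℝ ∞ u := hu.of_le (by simp)
    have hdf : ContDiff ℝ ∞ (deriv f) := UM.cd_deriv hf'
    set C : ℝ := (1 / 24) * (deriv (deriv (deriv f)) (u x) * (deriv u x) ^ 3
          + 6 * κ * deriv (deriv f) (u x) * deriv u x * deriv (deriv u) x
          + 2 * (3 * κ - 1) * deriv f (u x) * deriv (deriv (deriv u)) x) with hC
    have hU0 : UM.Ex (fun _ => u x) (u x) 0 0 0 := UM.ex_const (u x)
    have hU1 : UM.Ex (fun h => u (x + h)) (u x) (deriv u x)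
        (deriv (deriv u) x / 2) (deriv (deriv (deriv u)) x / 6) := by
      refine ((UM.ex_linear x 1).comp u hu').of_eq
        (fun h => by norm_num) ?_ ?_ ?_ ?_ <;> ring
    have hUm1 : UM.Ex (fun h => u (x - h)) (u x) (-deriv u x)
        (deriv (deriv u) x / 2) (-(deriv (deriv (deriv u)) x / 6)) := by
      refine ((UM.ex_linear x (-1)).comp u hu').of_eq
        (fun h => congrArg u (by ring)) ?_ ?_ ?_ ?_ <;> ring
    have hU2 : UM.Ex (fun h => u (x + 2*h)) (u x) (2*deriv u x)
        (2*deriv (deriv u) x) (4*deriv (deriv (deriv u)) x / 3) := by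
      refine ((UM.ex_linear x 2).comp u hu').of_eq (fun h => rfl) ?_ ?_ ?_ ?_ <;> ring
    have hUm2 : UM.Ex (fun h => u (x - 2*h)) (u x) (-(2*deriv u x))
        (2*deriv (deriv u) x) (-(4*deriv (deriv (deriv u)) x / 3)) := by
      refine ((UM.ex_linear x (-2)).comp u hu').of_eq
        (fun h => congrArg u (by ring)) ?_ ?_ ?_ ?_ <;> ring
    -- the four reconstructed states
    have hA : UM.Ex (fun h => uLp κ u x h) (u x) (deriv u x / 2)
        (κ * deriv (deriv u) x / 4) (deriv (deriv (deriv u)) x / 12) := by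
      refine (((hU0.add hU1).const_mul (κ/2)).add
        ((hU0.add ((hU1.sub hUm1).const_mul (1/4))).const_mul (1-κ))).of_eq
        (fun h => by simp only [uLp]; ring) ?_ ?_ ?_ ?_ <;> ring
    have hB : UM.Ex (fun h => uRp κ u x h) (u x) (deriv u x / 2)
        (κ * deriv (deriv u) x / 4)
        (κ * deriv (deriv (deriv u)) x / 4 - deriv (deriv (deriv u)) x / 6) := by
      refine (((hU1.add hU0).const_mul (κ/2)).add
        ((hU1.sub ((hU2.sub hU0).const_mul (1/4))).const_mul (1-κ))).of_eq
        (fun h => by simp only [uRp]; ring) ?_ ?_ ?_ ?_ <;> ring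
    have hC' : UM.Ex (fun h => uLm κ u x h) (u x) (-(deriv u x / 2))
        (κ * deriv (deriv u) x / 4)
        (deriv (deriv (deriv u)) x / 6 - κ * deriv (deriv (deriv u)) x / 4) := by
      refine (((hUm1.add hU0).const_mul (κ/2)).add
        ((hUm1.add ((hU0.sub hUm2).const_mul (1/4))).const_mul (1-κ))).of_eq
        (fun h => by simp only [uLm]; ring) ?_ ?_ ?_ ?_ <;> ring
    have hD : UM.Ex (fun h => uRm κ u x h) (u x) (-(deriv u x / 2))
        (κ * deriv (deriv u) x / 4) (-(deriv (deriv (deriv u)) x / 12)) := by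
      refine (((hU0.add hUm1).const_mul (κ/2)).add
        ((hU0.sub ((hU1.sub hUm1).const_mul (1/4))).const_mul (1-κ))).of_eq
        (fun h => by simp only [uRm]; ring) ?_ ?_ ?_ ?_ <;> ring
    -- midpoints
    have hMp : UM.Ex (fun h => (uLp κ u x h + uRp κ u x h) / 2) (u x) (deriv u x / 2)
        (κ * deriv (deriv u) x / 4)
        (κ * deriv (deriv (deriv u)) x / 8 - deriv (deriv (deriv u)) x / 24) := by
      refine ((hA.add hB).const_mul (1/2)).of_eq (fun h => by ring) ?_ ?_ ?_ ?_ <;> ring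
    have hMm : UM.Ex (fun h => (uLm κ u x h + uRm κ u x h) / 2) (u x) (-(deriv u x / 2))
        (κ * deriv (deriv u) x / 4)
        (deriv (deriv (deriv u)) x / 24 - κ * deriv (deriv (deriv u)) x / 8) := by
      refine ((hC'.add hD).const_mul (1/2)).of_eq (fun h => by ring) ?_ ?_ ?_ ?_ <;> ring
    -- compositions and products
    have hfA := hA.comp f hf'
    have hfB := hB.comp f hf'
    have hfC := hC'.comp f hf'
    have hfD := hD.comp f hf'
    have hgMp := hMp.comp (deriv f) hdf
    have hgMm := hMm.comp (deriv f) hdf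
    have hBA := hB.sub hA
    have hDC := hD.sub hC'
    have hP := hgMp.mul hBA
    have hQ := hgMm.mul hDC
    -- the numerator with the absolute values removed
    have hN : UM.Ex (fun h =>
        ((f (uLp κ u x h) + f (uRp κ u x h)) / 2
          - deriv f ((uLp κ u x h + uRp κ u x h) / 2) / 2 * (uRp κ u x h - uLp κ u x h))
        - ((f (uLm κ u x h) + f (uRm κ u x h)) / 2
          - deriv f ((uLm κ u x h + uRm κ u x h) / 2) / 2 * (uRm κ u x h - uLm κ u x h)))
        0 (deriv f (u x) * deriv u x) 0 C := by
      refine ((((hfA.add hfB).const_mul (1/2)).sub (hP.const_mul (1/2))).sub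
        (((hfC.add hfD).const_mul (1/2)).sub (hQ.const_mul (1/2)))).of_eq
        (fun h => by ring) ?_ ?_ ?_ ?_
      · ring
      · ring
      · ring
      · rw [hC]; ring
    -- eventual positivity of the face derivatives
    have hcu : Continuous u := hu'.continuous
    have hcdf : Continuous (deriv f) := hdf.continuous
    have hMpc : Continuous fun h : ℝ => (uLp κ u x h + uRp κ u x h) / 2 := by
      simp only [uLp, uRp]; fun_prop
    have hMmc : Continuous fun h : ℝ => (uLm κ u x h + uRm κ u x h) / 2 := by
      simp only [uLm, uRm]; fun_prop
    have hMp0 : (uLp κ u x 0 + uRp κ u x 0) / 2 = u x := by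
      simp [uLp, uRp]; ring
    have hMm0 : (uLm κ u x 0 + uRm κ u x 0) / 2 = u x := by
      simp [uLm, uRm]; ring
    have hev1 : ∀ᶠ h in 𝓝 (0:ℝ), 0 < deriv f ((uLp κ u x h + uRp κ u x h) / 2) := by
      have ht : Tendsto (fun h : ℝ => deriv f ((uLp κ u x h + uRp κ u x h) / 2))
          (𝓝 0) (𝓝 (deriv f (u x))) := by
        have := (hcdf.comp hMpc).continuousAt (x := (0:ℝ))
        simpa [ContinuousAt, Function.comp_def, hMp0] using this
      exact ht.eventually (eventually_gt_nhds hpos)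
    have hev2 : ∀ᶠ h in 𝓝 (0:ℝ), 0 < deriv f ((uLm κ u x h + uRm κ u x h) / 2) := by
      have ht : Tendsto (fun h : ℝ => deriv f ((uLm κ u x h + uRm κ u x h) / 2))
          (𝓝 0) (𝓝 (deriv f (u x))) := by
        have := (hcdf.comp hMmc).continuousAt (x := (0:ℝ))
        simpa [ContinuousAt, Function.comp_def, hMm0] using this
      exact ht.eventually (eventually_gt_nhds hpos)
    -- the absolute-value numerator
    have hNabs : (fun h => (numFlux f (uLp κ u x h) (uRp κ u x h)
        - numFlux f (uLm κ u x h) (uRm κ u x h))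
        - UM.P3 0 (deriv f (u x) * deriv u x) 0 C h) =O[𝓝 (0:ℝ)] fun h : ℝ => h^4 := by
      unfold UM.Ex at hN
      refine hN.congr' ?_ EventuallyEq.rfl
      filter_upwards [hev1, hev2] with h h1 h2
      simp only [numFlux]
      rw [abs_of_pos h1, abs_of_pos h2]
    -- pass to the one-sided limit and divide by h
    have hres : (fun h => umusclRes f κ u x h - C * h^2)
        =ᶠ[𝓝[>] (0:ℝ)] fun h => ((numFlux f (uLp κ u x h) (uRp κ u x h)
            - numFlux f (uLm κ u x h) (uRm κ u x h))
          - UM.P3 0 (deriv f (u x) * deriv u x) 0 C h) * h⁻¹ := by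
      filter_upwards [self_mem_nhdsWithin] with h hh
      have hne : h ≠ 0 := ne_of_gt hh
      simp only [umusclRes, UM.P3]
      field_simp
      ring
    have hfinal := (hNabs.mono nhdsWithin_le_nhds).mul
      (isBigO_refl (fun h : ℝ => h⁻¹) (𝓝[>] (0:ℝ)))
    have h43 : (fun h : ℝ => h^4 * h⁻¹) =ᶠ[𝓝[>] (0:ℝ)] fun h : ℝ => h^3 := by
      filter_upwards [self_mem_nhdsWithin] with h hh
      have hne : h ≠ 0 := ne_of_gt hh
      field_simp
    exact hfinal.congr' hres.symm h43
  · -- Part 2: only linear fluxes kill the second-order term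
    intro H w
    have h3 : ∀ z : ℝ, deriv (deriv (deriv f)) z = 0 := by
      intro z
      have hd1 : deriv (fun y : ℝ => y) = fun _ => (1:ℝ) := by
        funext y; simp
      have := H (fun y : ℝ => y) contDiff_id z
      rw [hd1] at this
      simpa using this
    have h2 : deriv (deriv f) w = 0 := by
      have hvc : ContDiff ℝ (⊤ : ℕ∞) (fun y : ℝ => w - 1/2 + y^2/2) :=
        contDiff_const.add ((contDiff_id.pow 2).div_const 2)
      have hd1 : deriv (fun y : ℝ => w - 1/2 + y^2/2) = fun y => y := by
        funext y
        have h2' : HasDerivAt (fun z : ℝ => z^2) (2*y) y := by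
          simpa using hasDerivAt_pow 2 y
        have hder : HasDerivAt (fun z : ℝ => w - 1/2 + z^2/2) y y := by
          have := (h2'.div_const 2).const_add (w - 1/2)
          exact this.congr_deriv (by ring)
        exact hder.deriv
      have hd2 : deriv (deriv (fun y : ℝ => w - 1/2 + y^2/2)) = fun _ => (1:ℝ) := by
        rw [hd1]; funext y; simp
      have hkey := H (fun y : ℝ => w - 1/2 + y^2/2) hvc 1
      rw [hd2] at hkey
      rw [hd1] at hkey
      have hv1 : w - 1/2 + (1:ℝ)^2/2 = w := by norm_num
      rw [hv1] at hkey
      have h3w := h3 w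
      rw [h3w] at hkey
      simp at hkey
      linarith
    exact ⟨h2, h3 w⟩
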